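/- arXiv:1509.05114 — 10 statements merged into one kernel-verified Lean document; each statement's English description precedes it below -/
import Mathlib

section
/- If the k-th center Z_k(G) has finite index in a group G for some positive integer k, then the (k+1)-th term of the lower central series γ_{k+1}(G) is finite. -/
/-!
Induction on `k`. Let `Z_k(G)` have finite index and put `M = γ_k(G)`. The induction hypothesis
for `G ⧸ Z(G)`, whose `(k-1)`-st centre `Z_k(G) ⧸ Z(G)` has finite index, makes `M ⧸ (M ∩ Z(G))`
finite; and `⁅γ_k, Z_k⁆ = 1` by the three subgroups lemma, so the centraliser of `M` has finite
index. Now `⁅a, g⁆` (`a ∈ M`, `g ∈ G`) depends only on `a` modulo `Z(G)` and on `g` modulo the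
centraliser, so there are finitely many such commutators. In particular `M` has finitely many
commutators, and Schur's theorem makes `⁅M, M⁆` finite. Modulo `⁅M, M⁆` the subgroup `M` is
abelian, so there `⁅a, g⁆ ^ e = ⁅a ^ e, g⁆ = 1` for `e = [M : M ∩ Z(G)]`: the image of
`γ_{k+1}(G) = ⁅M, G⁆` is a finitely generated abelian torsion group, hence finite.
-/

open scoped commutatorElement

theorem commutatorElement_pow_of_commute {G : Type*} [Group G] {a g : G}
    (h : Commute a (g * a * g⁻¹)) (n : ℕ) : ⁅a, g⁆ ^ n = ⁅a ^ n, g⁆ := by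
  have hconj (x : G) : ⁅x, g⁆ = x * (g * x * g⁻¹)⁻¹ := by
    simp only [commutatorElement_def]; group
  rw [hconj, hconj, h.inv_right.mul_pow, inv_pow, conj_pow]

theorem commutatorElement_mul_mul_of_mem_center {G : Type*} [Group G] {a g z c : G}
    (hz : z ∈ Subgroup.center G) (hc : Commute a c) : ⁅a * z, g * c⁆ = ⁅a, g⁆ := calc
  ⁅a * z, g * c⁆ = a * (z * (g * c) * z⁻¹) * a⁻¹ * (g * c)⁻¹ := by
    simp only [commutatorElement_def]; group
  _ = a * g * (a⁻¹ * c) * c⁻¹ * g⁻¹ := by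
    rw [← Subgroup.mem_center_iff.mp hz, mul_inv_cancel_right, hc.inv_left.eq]; group
  _ = ⁅a, g⁆ := by simp only [commutatorElement_def]; group

namespace Subgroup

variable {G : Type*} [Group G]

open scoped IsMulCommutative in
theorem finite_closure_of_commute_of_isOfFinOrder {s : Set G} (hs : s.Finite)
    (hcomm : ∀ x ∈ s, ∀ y ∈ s, x * y = y * x) (hfin : ∀ x ∈ s, IsOfFinOrder x) :
    Finite (closure s) := by
  have := isMulCommutative_closure hcomm
  have := hs.to_subtype
  have : Group.FG (closure s) := Group.closure_finite_fg s
  refine CommGroup.finite_of_fg_isMulTorsion (closure s) fun x => ?_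
  have hgen : closure (((↑) : closure s → G) ⁻¹' s) ≤ CommGroup.torsion (closure s) :=
    (closure_le _).mpr fun y hy => Submonoid.isOfFinOrder_coe.mp (hfin y hy)
  exact hgen (by rw [closure_closure_coe_preimage]; trivial)

theorem finite_of_finite_map_of_finite_ker {H : Type*} [Group H] (f : G →* H) (K : Subgroup G)
    [Finite f.ker] [Finite (K.map f)] : Finite K := by
  refine (f.domRestrict K).finite_iff_finite_ker_range.mpr ⟨?_, ?_⟩
  · rw [MonoidHom.ker_domRestrict]
    exact Finite.of_injective (fun x => (⟨x.1.1, x.2⟩ : f.ker)) fun x y hxy => by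
      ext
      exact congrArg (fun z : f.ker => (z : G)) hxy
  · rw [MonoidHom.domRestrict_range]
    infer_instance

theorem commutator_top_eq_closure_image2 (M : Subgroup G) :
    ⁅M, (⊤ : Subgroup G)⁆ =
      closure (Set.image2 (fun a g : G => ⁅a, g⁆) (M : Set G) Set.univ) := by
  rw [commutator_def, ← coe_top]
  rfl

theorem finite_image2_commutatorElement (M : Subgroup G) [(center G).IsFiniteRelIndex M]
    [(centralizer (M : Set G)).FiniteIndex] :
    (Set.image2 (fun a g : G => ⁅a, g⁆) (M : Set G) Set.univ).Finite := by
  refine (Set.finite_range fun q : (M ⧸ (center G).subgroupOf M) × (G ⧸ centralizer M) =>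
    ⁅(q.1.out : G), q.2.out⁆).subset ?_
  rintro _ ⟨a, ha, g, -, rfl⟩
  obtain ⟨z, hz⟩ := QuotientGroup.mk_out_eq_mul ((center G).subgroupOf M) ⟨a, ha⟩
  obtain ⟨c, hc⟩ := QuotientGroup.mk_out_eq_mul (centralizer (M : Set G)) g
  refine ⟨(QuotientGroup.mk ⟨a, ha⟩, QuotientGroup.mk g), ?_⟩
  simp only [hz, hc, coe_mul]
  exact commutatorElement_mul_mul_of_mem_center (mem_subgroupOf.mp z.2) (c.2 a ha)

theorem finite_commutator_self_of_finite_image2 {M : Subgroup G}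
    (hT : (Set.image2 (fun a g : G => ⁅a, g⁆) (M : Set G) Set.univ).Finite) :
    Finite (⁅M, M⁆ : Subgroup G) := by
  have : Finite (commutatorSet M) :=
    (hT.preimage Subtype.val_injective.injOn).subset fun _ ⟨a, b, hab⟩ =>
      ⟨a, a.2, b, trivial, by rw [← hab]; rfl⟩
  rw [← map_subtype_commutator]
  exact .of_equiv _ ((_root_.commutator M).equivMapOfInjective _ Subtype.val_injective).toEquiv

theorem finite_commutator_top_of_finiteIndex_centralizer (M : Subgroup G) [M.Normal]
    [(center G).IsFiniteRelIndex M] [(centralizer (M : Set G)).FiniteIndex] :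
    Finite (⁅M, ⊤⁆ : Subgroup G) := by
  set T := Set.image2 (fun a g : G => ⁅a, g⁆) (M : Set G) Set.univ
  have hT : T.Finite := finite_image2_commutatorElement M
  have := finite_commutator_self_of_finite_image2 hT
  let π := QuotientGroup.mk' ⁅M, M⁆
  have hcomm : ∀ x ∈ M, ∀ y ∈ M, π x * π y = π y * π x := fun x hx y hy => by
    rw [← commutatorElement_eq_one_iff_mul_comm, ← map_commutatorElement,
      QuotientGroup.mk'_apply, QuotientGroup.eq_one_iff]
    exact commutator_mem_commutator hx hy
  have hfin : ∀ x ∈ π '' T, IsOfFinOrder x := by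
    rintro _ ⟨_, ⟨a, ha, g, -, rfl⟩, rfl⟩
    have hpow : a ^ (center G).relIndex M ∈ center G :=
      mem_subgroupOf.mp (pow_index_mem _ ⟨a, ha⟩)
    have hconj : Commute (π a) (π g * π a * (π g)⁻¹) := by
      rw [← map_inv, ← map_mul, ← map_mul]
      exact hcomm a ha _ (Normal.conj_mem inferInstance a ha g)
    refine isOfFinOrder_iff_pow_eq_one.mpr
      ⟨_, Nat.pos_of_ne_zero (relIndex_ne_zero (H := center G) (K := M)), ?_⟩
    rw [map_commutatorElement, commutatorElement_pow_of_commute hconj, ← map_pow,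
      ← map_commutatorElement, commutatorElement_eq_one_iff_mul_comm.mpr
        (mem_center_iff.mp hpow g).symm, map_one]
  have hTM : T ⊆ M := by
    rintro _ ⟨a, ha, g, -, rfl⟩
    exact commutator_le_left M ⊤ (commutator_mem_commutator ha (mem_top g))
  have : Finite ((⁅M, ⊤⁆ : Subgroup G).map π) := by
    rw [commutator_top_eq_closure_image2, MonoidHom.map_closure]
    refine finite_closure_of_commute_of_isOfFinOrder (hT.image π) ?_ hfin
    simp only [Set.forall_mem_image]
    exact fun x hx y hy => hcomm x (hTM hx) y (hTM hy)
  have : Finite π.ker := by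
    rw [QuotientGroup.ker_mk']
    infer_instance
  exact finite_of_finite_map_of_finite_ker π _

theorem commutator_commutator_le_of_rotate {H₁ H₂ H₃ N : Subgroup G} [N.Normal]
    (h1 : ⁅⁅H₂, H₃⁆, H₁⁆ ≤ N) (h2 : ⁅⁅H₃, H₁⁆, H₂⁆ ≤ N) : ⁅⁅H₁, H₂⁆, H₃⁆ ≤ N := by
  let π := QuotientGroup.mk' N
  have hquot {A B C : Subgroup G} :
      ⁅⁅A, B⁆, C⁆ ≤ N ↔ ⁅⁅A.map π, B.map π⁆, C.map π⁆ = ⊥ := by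
    rw [← map_commutator, ← map_commutator, map_eq_bot_iff, QuotientGroup.ker_mk']
  exact hquot.mpr (commutator_commutator_eq_bot_of_rotate (hquot.mp h1) (hquot.mp h2))

-- `lowerCentralSeries j` is the classical `γ_{j+1}`.
theorem commutator_lowerCentralSeries_upperCentralSeries_le (j i : ℕ) :
    ⁅(⊤ : Subgroup G).lowerCentralSeries j, upperCentralSeries G (i + j + 1)⁆ ≤
      upperCentralSeries G i := by
  induction j generalizing i with
  | zero =>
    rw [commutator_comm]
    exact commutator_upperCentralSeries_top_le G i
  | succ j ih =>
    apply commutator_commutator_le_of_rotate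
    · calc ⁅⁅(⊤ : Subgroup G), upperCentralSeries G (i + j + 1 + 1)⁆,
            (⊤ : Subgroup G).lowerCentralSeries j⁆
          ≤ ⁅upperCentralSeries G (i + j + 1), (⊤ : Subgroup G).lowerCentralSeries j⁆ :=
            commutator_mono
              (by rw [commutator_comm]; exact commutator_upperCentralSeries_top_le G _) le_rfl
        _ ≤ upperCentralSeries G i := by rw [commutator_comm]; exact ih i
    · rw [show i + (j + 1) + 1 = i + 1 + j + 1 by omega]
      calc ⁅⁅upperCentralSeries G (i + 1 + j + 1), (⊤ : Subgroup G).lowerCentralSeries j⁆, ⊤⁆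
          ≤ ⁅upperCentralSeries G (i + 1), ⊤⁆ :=
            commutator_mono (by rw [commutator_comm]; exact ih (i + 1)) le_rfl
        _ ≤ upperCentralSeries G i := commutator_upperCentralSeries_top_le G i

theorem upperCentralSeries_succ_le_centralizer_lowerCentralSeries (k : ℕ) :
    upperCentralSeries G (k + 1) ≤
      centralizer ((⊤ : Subgroup G).lowerCentralSeries k : Set G) := by
  rw [← commutator_eq_bot_iff_le_centralizer, commutator_comm, ← le_bot_iff]
  simpa using commutator_lowerCentralSeries_upperCentralSeries_le (G := G) k 0

theorem isFiniteRelIndex_center_of_finite_map {M : Subgroup G}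
    [Finite (M.map (QuotientGroup.mk' (center G)))] : (center G).IsFiniteRelIndex M :=
  ⟨by rw [← QuotientGroup.ker_mk' (center G), relIndex_ker]; exact Nat.card_pos.ne'⟩

theorem finite_lowerCentralSeries_of_finiteIndex_upperCentralSeries (k : ℕ)
    [(upperCentralSeries G k).FiniteIndex] : Finite ((⊤ : Subgroup G).lowerCentralSeries k) := by
  induction k generalizing G with
  | zero =>
    have hG := FiniteIndex.index_ne_zero (H := upperCentralSeries G 0)
    rw [upperCentralSeries_zero, index_bot] at hG
    have : Finite G := Nat.finite_of_card_ne_zero hG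
    infer_instance
  | succ k ih =>
    have : (upperCentralSeries (G ⧸ center G) k).FiniteIndex := by
      have hindex := index_comap_of_surjective (H := upperCentralSeries (G ⧸ center G) k)
        (QuotientGroup.mk'_surjective (center G))
      rw [comap_upperCentralSeries_quotient_center] at hindex
      exact ⟨hindex ▸ FiniteIndex.index_ne_zero⟩
    have : Finite (((⊤ : Subgroup G).lowerCentralSeries k).map (QuotientGroup.mk' (center G))) := by
      rw [map_lowerCentralSeries, map_top_of_surjective _ (QuotientGroup.mk'_surjective _)]
      exact ih
    have := isFiniteRelIndex_center_of_finite_map (M := (⊤ : Subgroup G).lowerCentralSeries k)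
    have := finiteIndex_of_le (upperCentralSeries_succ_le_centralizer_lowerCentralSeries (G := G) k)
    exact finite_commutator_top_of_finiteIndex_centralizer _

end Subgroup

theorem baer_general (G : Type*) [Group G] (k : ℕ)
    (h : (Subgroup.upperCentralSeries G k).FiniteIndex) :
    Finite ((⊤ : Subgroup G).lowerCentralSeries k) :=
  Subgroup.finite_lowerCentralSeries_of_finiteIndex_upperCentralSeries k

/-- Baer's theorem: if the k-th center has finite index, then γ_{k+1}(G) is finite. -/
theorem baer (G : Type*) [Group G] (k : ℕ) (hk : 0 < k)
    (h : (Subgroup.upperCentralSeries G k).FiniteIndex) :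
    Finite ((⊤ : Subgroup G).lowerCentralSeries k) :=
  baer_general G k h
end

section
/- If γ_{k+1}(G) is finite for some positive integer k, then Z_{2k}(G) has finite index in G. -/
/-!
Mathlib's `lowerCentralSeries n` is `γ_{n+1}`. By downward induction on `n` we show that
`Z_{2k-n}` has finite index relative to `γ_{n+1}`: for `n ≥ k` this is finiteness of `γ_{k+1}`,
and `n = 0` is the theorem. In the inductive step, for `n < m ≤ 2n + 1` the elements centralizing
`γ_{m+1}` modulo `Z_{2k-m-1}` form a subgroup of finite index, because finitely many coset
representatives of `Z_{2k-m}` in `γ_{m+1}` suffice. Their intersection `D` has finite index, so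
`G = ⟨D, R⟩` for a finite set `R`, and the elements of `γ_{n+1}` centralizing `R` modulo
`Z_{2k-n-1}` and `γ_{n+2}` modulo `Z_{2k-2n-2}` form a subgroup `X` of finite index in `γ_{n+1}`.
The three subgroups lemma, applied while descending from `[γ_{n+2}, X]` to `[G, X]`,
puts `X` inside `Z_{2k-n}`.
-/

open scoped commutatorElement

namespace Subgroup

variable {G : Type*} [Group G]

theorem commutator_lowerCentralSeries_le (a b : ℕ) :
    ⁅(⊤ : Subgroup G).lowerCentralSeries a, (⊤ : Subgroup G).lowerCentralSeries b⁆ ≤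
      (⊤ : Subgroup G).lowerCentralSeries (a + b + 1) := by
  induction b generalizing a with
  | zero => exact (lowerCentralSeries_succ _ a).symm.le
  | succ b ih =>
    rw [lowerCentralSeries_succ, commutator_comm]
    apply commutator_commutator_le_of_rotate
    · rw [commutator_comm ⊤, ← lowerCentralSeries_succ,
        show a + (b + 1) + 1 = a + 1 + b + 1 by omega]
      exact ih (a + 1)
    · rw [show a + (b + 1) + 1 = a + b + 1 + 1 by omega, lowerCentralSeries_succ]
      exact commutator_mono (ih a) le_rfl

theorem commutator_le_lowerCentralSeries_succ (H : Subgroup G) (n : ℕ) :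
    ⁅H, (⊤ : Subgroup G).lowerCentralSeries n⁆ ≤ (⊤ : Subgroup G).lowerCentralSeries (n + 1) := by
  rw [lowerCentralSeries_succ, commutator_comm]
  exact commutator_mono le_rfl le_top

theorem commutator_top_le_iff_le_upperCentralSeries_succ {H : Subgroup G} {n : ℕ} :
    ⁅H, ⊤⁆ ≤ upperCentralSeries G n ↔ H ≤ upperCentralSeries G (n + 1) := by
  rw [commutator_le]
  simp only [mem_top, forall_const, SetLike.le_def, mem_upperCentralSeries_succ_iff]

theorem commutator_upperCentralSeries_lowerCentralSeries_le (p q : ℕ) :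
    ⁅upperCentralSeries G (p + q + 1), (⊤ : Subgroup G).lowerCentralSeries q⁆ ≤
      upperCentralSeries G p := by
  induction q generalizing p with
  | zero => exact commutator_upperCentralSeries_top_le G p
  | succ q ih =>
    rw [lowerCentralSeries_succ, commutator_comm]
    apply commutator_commutator_le_of_rotate
    · rw [commutator_comm ⊤]
      exact (commutator_mono (commutator_upperCentralSeries_top_le G _) le_rfl).trans (ih p)
    · refine (commutator_mono ?_ le_rfl).trans (commutator_upperCentralSeries_top_le G p)
      simpa only [Nat.add_right_comm _ 1 q, Nat.add_assoc] using ih (p + 1)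

theorem exists_finite_le_sup_closure {H U : Subgroup G} (h : H.relIndex U ≠ 0) :
    ∃ R : Set G, R.Finite ∧ R ⊆ U ∧ U ≤ H ⊔ closure R := by
  have : (H.subgroupOf U).FiniteIndex := ⟨h⟩
  refine ⟨Set.range fun q : U ⧸ H.subgroupOf U => (q.out : G), Set.finite_range _,
    Set.range_subset_iff.2 fun q => q.out.2, fun u hu => ?_⟩
  set q : U ⧸ H.subgroupOf U := QuotientGroup.mk ⟨u, hu⟩
  have hq : q.out⁻¹ * ⟨u, hu⟩ ∈ H.subgroupOf U := QuotientGroup.eq.1 q.out_eq'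
  rw [show u = q.out * ((q.out⁻¹ * ⟨u, hu⟩ : U) : G) by simp]
  exact mul_mem (mem_sup_right (subset_closure ⟨q, rfl⟩)) (mem_sup_left hq)

theorem relIndex_centralizer_singleton_ne_zero {w : G} {A F : Subgroup G} [Finite F]
    (h : ∀ a ∈ A, ⁅w, a⁆ ∈ F) : (centralizer {w}).relIndex A ≠ 0 := by
  have : Finite (A ⧸ (centralizer {w}).subgroupOf A) := by
    refine Finite.of_injective (fun q => (⟨⁅w, (q.out : G)⁆, h _ q.out.2⟩ : F)) fun q₁ q₂ hq => ?_
    rw [← q₁.out_eq', ← q₂.out_eq', QuotientGroup.eq, mem_subgroupOf, mem_centralizer_singleton_iff]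
    set a : G := (q₁.out : G)
    set b : G := (q₂.out : G)
    have hconj : a * w * a⁻¹ = b * w * b⁻¹ := by
      have hq : ⁅w, a⁆ = ⁅w, b⁆ := congrArg Subtype.val hq
      simpa [commutatorElement_def, mul_assoc] using congrArg (fun x => (w⁻¹ * x)⁻¹) hq
    calc a⁻¹ * b * w = a⁻¹ * (b * w * b⁻¹) * b := by group
      _ = w * (a⁻¹ * b) := by rw [← hconj]; group
  exact index_ne_zero_of_finite

section CentralizerMod

variable (N : Subgroup G) [N.Normal]

def centralizerMod (s : Set G) : Subgroup G :=
  (centralizer (QuotientGroup.mk' N '' s)).comap (QuotientGroup.mk' N)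

variable {N}

theorem mem_centralizerMod {s : Set G} {g : G} :
    g ∈ centralizerMod N s ↔ ∀ h ∈ s, ⁅h, g⁆ ∈ N := by
  simp only [centralizerMod, mem_comap, mem_centralizer_iff_commutator_eq_one, Set.forall_mem_image]
  refine forall₂_congr fun h _ => ?_
  rw [← QuotientGroup.eq_one_iff, ← QuotientGroup.mk'_apply, map_commutatorElement]

theorem commutator_le_iff_le_centralizerMod {H K : Subgroup G} :
    ⁅H, K⁆ ≤ N ↔ K ≤ centralizerMod N H := by
  rw [commutator_le, SetLike.le_def]
  simp only [mem_centralizerMod]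
  exact ⟨fun h k hk g hg => h g hg k hk, fun h g hg k hk => h hk g hg⟩

theorem centralizerMod_closure (s : Set G) : centralizerMod N (closure s) = centralizerMod N s := by
  rw [centralizerMod, centralizerMod, ← coe_map, MonoidHom.map_closure, centralizer_closure]

theorem centralizerMod_union (s t : Set G) :
    centralizerMod N (s ∪ t) = centralizerMod N s ⊓ centralizerMod N t := by
  ext g
  simp only [mem_inf, mem_centralizerMod, Set.mem_union, or_imp, forall_and]

theorem centralizerMod_sup (H K : Subgroup G) :
    centralizerMod N (H ⊔ K : Subgroup G) = centralizerMod N H ⊓ centralizerMod N K := by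
  rw [← closure_eq H, ← closure_eq K, ← closure_union, centralizerMod_closure, centralizerMod_union,
    centralizerMod_closure, centralizerMod_closure]

theorem centralizerMod_anti {s t : Set G} (h : s ⊆ t) : centralizerMod N t ≤ centralizerMod N s :=
  fun _ hg => mem_centralizerMod.2 fun x hx => mem_centralizerMod.1 hg x (h hx)

theorem commutator_sup_le {H K₁ K₂ : Subgroup G} (h₁ : ⁅H, K₁⁆ ≤ N) (h₂ : ⁅H, K₂⁆ ≤ N) :
    ⁅H, K₁ ⊔ K₂⁆ ≤ N :=
  commutator_le_iff_le_centralizerMod.2 <|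
    sup_le (commutator_le_iff_le_centralizerMod.1 h₁) (commutator_le_iff_le_centralizerMod.1 h₂)

theorem relIndex_centralizerMod_ne_zero {R : Set G} (hR : R.Finite) {A M : Subgroup G}
    (hRA : ⁅closure R, A⁆ ≤ M) (hM : N.relIndex M ≠ 0) : (centralizerMod N R).relIndex A ≠ 0 := by
  have : Finite (M.map (QuotientGroup.mk' N)) := by
    rw [← QuotientGroup.ker_mk' N, ← MonoidHom.comap_bot, relIndex_comap, relIndex_bot_left] at hM
    exact Nat.finite_of_card_ne_zero hM
  have : Finite R := hR.to_subtype
  have hiInf : centralizerMod N R = ⨅ v : R, centralizerMod N {(v : G)} := by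
    ext g
    simp only [mem_centralizerMod, mem_iInf, Set.mem_singleton_iff, forall_eq, Subtype.forall]
  rw [hiInf]
  refine relIndex_iInf_ne_zero fun v => ?_
  rw [centralizerMod, Set.image_singleton, relIndex_comap]
  refine relIndex_centralizer_singleton_ne_zero (F := M.map (QuotientGroup.mk' N)) ?_
  rintro _ ⟨a, ha, rfl⟩
  rw [← map_commutatorElement]
  exact mem_map_of_mem _ (hRA (commutator_mem_commutator (subset_closure v.2) ha))

theorem relIndex_centralizerMod_ne_zero_of_relIndex {T U A M : Subgroup G}
    (hTU : T.relIndex U ≠ 0) (hTA : ⁅T, A⁆ ≤ N) (hUA : ⁅U, A⁆ ≤ M) (hM : N.relIndex M ≠ 0) :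
    (centralizerMod N U).relIndex A ≠ 0 := by
  obtain ⟨R, hRfin, hRU, hUTR⟩ := exists_finite_le_sup_closure hTU
  have hle : centralizerMod N T ⊓ centralizerMod N R ≤ centralizerMod N U := by
    rw [← centralizerMod_closure R, ← centralizerMod_sup]
    exact centralizerMod_anti hUTR
  refine fun h0 => relIndex_inf_ne_zero ?_ ?_ (relIndex_eq_zero_of_le_left hle h0)
  · rw [relIndex_eq_one.2 (commutator_le_iff_le_centralizerMod.1 hTA)]
    exact one_ne_zero
  · exact relIndex_centralizerMod_ne_zero hRfin
      ((commutator_mono (closure_le _ |>.2 hRU) le_rfl).trans hUA) hM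

end CentralizerMod

theorem le_upperCentralSeries_of_commutator_le {n e : ℕ} {X D : Subgroup G} {R : Set G}
    (hXn : X ≤ (⊤ : Subgroup G).lowerCentralSeries n) (hDR : ⊤ ≤ D ⊔ closure R)
    (hX : ⁅(⊤ : Subgroup G).lowerCentralSeries (n + 1), X⁆ ≤ upperCentralSeries G e)
    (hXR : ⁅X, closure R⁆ ≤ upperCentralSeries G (e + n + 1))
    (hD : ∀ i ≤ n, ⁅(⊤ : Subgroup G).lowerCentralSeries (n + 1 + i), D⁆ ≤
      upperCentralSeries G (e + n - i)) :
    X ≤ upperCentralSeries G (e + n + 2) := by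
  -- `key` descends from `γ_{n+2}` to `γ_1 = G`, splitting `G = ⟨D, R⟩` at each step.
  have key : ∀ i ≤ n + 1, ∀ m, m + i = n + 1 →
      ⁅(⊤ : Subgroup G).lowerCentralSeries m, X⁆ ≤ upperCentralSeries G (e + i) := by
    intro i
    induction i with
    | zero => intro _ m hm; rwa [show m = n + 1 by omega]
    | succ i ih =>
      intro hi m hm
      refine commutator_top_le_iff_le_upperCentralSeries_succ.1 ?_
      refine (commutator_mono le_rfl hDR).trans (commutator_sup_le ?_ ?_)
      · calc ⁅⁅(⊤ : Subgroup G).lowerCentralSeries m, X⁆, D⁆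
            ≤ ⁅(⊤ : Subgroup G).lowerCentralSeries (n + 1 + m), D⁆ := by
              refine commutator_mono ((commutator_mono le_rfl hXn).trans ?_) le_rfl
              simpa only [Nat.add_comm m n, Nat.add_right_comm n m 1, Nat.add_assoc]
                using commutator_lowerCentralSeries_le m n
          _ ≤ upperCentralSeries G (e + i) := by
              simpa only [show e + n - m = e + i by omega] using hD m (by omega)
      · apply commutator_commutator_le_of_rotate
        · refine (commutator_mono hXR le_rfl).trans ?_
          rw [show e + n + 1 = e + i + m + 1 by omega]
          exact commutator_upperCentralSeries_lowerCentralSeries_le (e + i) m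
        · exact (commutator_mono (commutator_le_lowerCentralSeries_succ _ m) le_rfl).trans
            (ih (by omega) (m + 1) (by omega))
  rw [← commutator_top_le_iff_le_upperCentralSeries_succ, commutator_comm]
  simpa only [lowerCentralSeries_zero, ← Nat.add_assoc] using key (n + 1) le_rfl 0 (by omega)

theorem relIndex_ne_zero_of_finite_lowerCentralSeries {k m : ℕ} (hkm : k ≤ m)
    [Finite ((⊤ : Subgroup G).lowerCentralSeries k)] (H : Subgroup G) :
    H.relIndex ((⊤ : Subgroup G).lowerCentralSeries m) ≠ 0 := by
  have hle := lowerCentralSeries_antitone (⊤ : Subgroup G) hkm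
  have : Finite ((⊤ : Subgroup G).lowerCentralSeries m) :=
    Finite.of_injective (inclusion hle) (inclusion_injective hle)
  exact index_ne_zero_of_finite

theorem relIndex_upperCentralSeries_lowerCentralSeries_ne_zero_of_lt {k n : ℕ} (hn : n < k)
    (ih : ∀ m, n < m →
      (upperCentralSeries G (2 * k - m)).relIndex ((⊤ : Subgroup G).lowerCentralSeries m) ≠ 0) :
    (upperCentralSeries G (2 * k - n)).relIndex ((⊤ : Subgroup G).lowerCentralSeries n) ≠ 0 := by
  obtain ⟨e, he⟩ : ∃ e, 2 * k = e + 2 * n + 2 := ⟨2 * k - 2 * n - 2, by omega⟩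
  have ih' : ∀ m j, n < m → j + m = 2 * k →
      (upperCentralSeries G j).relIndex ((⊤ : Subgroup G).lowerCentralSeries m) ≠ 0 :=
    fun m j hm hj => by simpa only [show 2 * k - m = j by omega] using ih m hm
  have hD : ∀ i : Fin (n + 1), (centralizerMod (upperCentralSeries G (e + n - i))
      ((⊤ : Subgroup G).lowerCentralSeries (n + 1 + i))).relIndex ⊤ ≠ 0 := fun i =>
    relIndex_centralizerMod_ne_zero_of_relIndex (ih' _ (e + n - i + 1) (by omega) (by omega))
      (commutator_upperCentralSeries_top_le G _) (lowerCentralSeries_succ _ _).ge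
      (ih' _ _ (by omega) (by omega))
  obtain ⟨R, hR, -, hDR⟩ := exists_finite_le_sup_closure (relIndex_iInf_ne_zero hD)
  set X := (⊤ : Subgroup G).lowerCentralSeries n
    ⊓ centralizerMod (upperCentralSeries G (e + n + 1)) R
    ⊓ centralizerMod (upperCentralSeries G e) ((⊤ : Subgroup G).lowerCentralSeries (n + 1))
  have hXZ : X ≤ upperCentralSeries G (2 * k - n) := by
    rw [show 2 * k - n = e + n + 2 by omega]
    refine le_upperCentralSeries_of_commutator_le (inf_le_left.trans inf_le_left) hDR
      (commutator_le_iff_le_centralizerMod.2 inf_le_right) ?_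
      fun i hi => commutator_le_iff_le_centralizerMod.2 (iInf_le_of_le ⟨i, by omega⟩ le_rfl)
    rw [commutator_comm, commutator_le_iff_le_centralizerMod, centralizerMod_closure]
    exact inf_le_left.trans inf_le_right
  have hX : X.relIndex ((⊤ : Subgroup G).lowerCentralSeries n) ≠ 0 := by
    refine relIndex_inf_ne_zero (relIndex_inf_ne_zero (by simp [relIndex_self]) ?_) ?_
    · exact relIndex_centralizerMod_ne_zero hR (commutator_le_lowerCentralSeries_succ _ n)
        (ih' _ _ (by omega) (by omega))
    · exact relIndex_centralizerMod_ne_zero_of_relIndex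
        (ih' (n + 1) (e + n + 1) (by omega) (by omega))
        (commutator_upperCentralSeries_lowerCentralSeries_le e n)
        (by simpa only [show n + 1 + n + 1 = 2 * n + 2 by omega]
          using commutator_lowerCentralSeries_le (G := G) (n + 1) n)
        (ih' (2 * n + 2) e (by omega) (by omega))
  exact fun h0 => hX (relIndex_eq_zero_of_le_left hXZ h0)

theorem relIndex_upperCentralSeries_lowerCentralSeries_ne_zero {k : ℕ}
    [Finite ((⊤ : Subgroup G).lowerCentralSeries k)] (n : ℕ) :
    (upperCentralSeries G (2 * k - n)).relIndex ((⊤ : Subgroup G).lowerCentralSeries n) ≠ 0 := by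
  induction hd : k - n using Nat.strong_induction_on generalizing n with
  | _ d ih =>
    rcases le_or_gt k n with hkn | hnk
    · exact relIndex_ne_zero_of_finite_lowerCentralSeries hkn _
    · exact relIndex_upperCentralSeries_lowerCentralSeries_ne_zero_of_lt hnk
        fun m hm => ih (k - m) (by omega) m rfl

end Subgroup

theorem hall_general (G : Type*) [Group G] (k : ℕ)
    (h : Finite ((⊤ : Subgroup G).lowerCentralSeries k)) :
    (Subgroup.upperCentralSeries G (2 * k)).FiniteIndex :=
  ⟨by simpa using Subgroup.relIndex_upperCentralSeries_lowerCentralSeries_ne_zero (G := G) 0⟩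

/-- P. Hall's theorem: if γ_{k+1}(G) is finite, then Z_{2k}(G) has finite index. -/
theorem hall (G : Type*) [Group G] (k : ℕ) (hk : 0 < k)
    (h : Finite ((⊤ : Subgroup G).lowerCentralSeries k)) :
    (Subgroup.upperCentralSeries G (2 * k)).FiniteIndex :=
  hall_general G k h
end

section
/- Every finite-by-nilpotent group is nilpotent-by-finite. -/
/-!
The centralizer `C` of the finite normal subgroup `N` is the kernel of the conjugation action
`G → Aut N`, so it is normal of finite index. Its intersection with `N` is central in `C`, and
`C / (C ∩ N)` embeds into the nilpotent group `G / N`; a central extension of a nilpotent group is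
nilpotent, so `C` is nilpotent.
-/

namespace Subgroup

variable {G : Type*} [Group G]

theorem ker_conjNormal (N : Subgroup G) [N.Normal] :
    (MulAut.conjNormal (H := N)).ker = centralizer N := by
  ext g
  simp only [MonoidHom.mem_ker, mem_centralizer_iff, MulEquiv.ext_iff, Subtype.ext_iff,
    MulAut.conjNormal_apply, MulAut.one_apply, Subtype.forall, SetLike.mem_coe]
  exact forall₂_congr fun n _ ↦ by rw [mul_inv_eq_iff_eq_mul, eq_comm]

instance finiteIndex_centralizer (N : Subgroup G) [N.Normal] [Finite N] :
    (centralizer (N : Set G)).FiniteIndex := by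
  have : Finite (MulAut N) := Finite.of_injective _ MulEquiv.toEquiv_injective
  rw [← ker_conjNormal]
  infer_instance

theorem isNilpotent_of_le_centralizer {N H : Subgroup G} [N.Normal]
    [Group.IsNilpotent (G ⧸ N)] (hH : H ≤ centralizer N) : Group.IsNilpotent H := by
  refine isNilpotent_of_ker_le_center ((QuotientGroup.mk' N).comp H.subtype) fun h hh ↦ ?_
  have hhN : (h : G) ∈ N := by simpa [QuotientGroup.eq_one_iff] using hh
  exact mem_center_iff.mpr fun k ↦ Subtype.ext (hH k.2 h hhN).symm

end Subgroup

/-- Every finite-by-nilpotent group is nilpotent-by-finite. -/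
theorem finite_by_nilpotent_is_nilpotent_by_finite (G : Type*) [Group G]
    (N : Subgroup G) [N.Normal] (hfin : Finite N)
    (hnil : Group.IsNilpotent (G ⧸ N)) :
    ∃ K : Subgroup G, K.Normal ∧ Group.IsNilpotent K ∧ K.FiniteIndex :=
  ⟨Subgroup.centralizer N, inferInstance, Subgroup.isNilpotent_of_le_centralizer le_rfl,
    Subgroup.finiteIndex_centralizer N⟩
end

section
/- If G is central-by-finite (i.e., Z(G) has finite index in G), then the derived subgroup G' is finite, and the exponent of G' divides the index |G : Z(G)|. -/
/-!
Commutators are constant on cosets of the centre, so `[G : Z(G)] < ∞` leaves only finitely many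
commutators, and a group with finitely many commutators has a finite derived subgroup. The transfer
`G → Z(G)` is `g ↦ g ^ [G : Z(G)]`; as a homomorphism into an abelian group it kills `G'`.
-/

open Subgroup
open scoped commutatorElement

section

variable {G : Type*} [Group G]

theorem commutatorElement_mul_mem_center_left {z : G} (hz : z ∈ center G) (a b : G) :
    ⁅a * z, b⁆ = ⁅a, b⁆ := by
  rw [commutatorElement_def, commutatorElement_def, mul_assoc a z b, ← mem_center_iff.mp hz b]
  group

theorem commutatorElement_mul_mem_center_right {z : G} (hz : z ∈ center G) (a b : G) :
    ⁅a, b * z⁆ = ⁅a, b⁆ := by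
  rw [← inv_inj, commutatorElement_inv, commutatorElement_inv,
    commutatorElement_mul_mem_center_left hz]

theorem commutatorElement_eq_of_mk_eq {a b c d : G} (hac : (a : G ⧸ center G) = c)
    (hbd : (b : G ⧸ center G) = d) : ⁅a, b⁆ = ⁅c, d⁆ := by
  rw [QuotientGroup.eq] at hac hbd
  rw [← commutatorElement_mul_mem_center_left hac, ← commutatorElement_mul_mem_center_right hbd,
    mul_inv_cancel_left, mul_inv_cancel_left]

instance finite_commutatorSet_of_finiteIndex_center [FiniteIndex (center G)] :
    Finite (commutatorSet G) := by
  have : Finite (G ⧸ center G) := finite_quotient_of_finiteIndex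
  refine Set.Finite.subset (Set.finite_range fun p : (G ⧸ center G) × (G ⧸ center G) =>
    ⁅p.1.out, p.2.out⁆) ?_
  rintro _ ⟨a, b, rfl⟩
  exact ⟨(a, b), commutatorElement_eq_of_mk_eq (QuotientGroup.out_eq' (a : G ⧸ center G))
    (QuotientGroup.out_eq' (b : G ⧸ center G))⟩

open scoped IsMulCommutative in
theorem pow_index_center_eq_one_of_mem_commutator {g : G} (hg : g ∈ commutator G) :
    g ^ (center G).index = 1 := by
  by_cases hG : (center G).FiniteIndex
  · have := Abelianization.commutator_subset_ker (MonoidHom.transferCenterPow G) hg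
    simpa only [MonoidHom.mem_ker, Subtype.ext_iff] using! this
  · rw [not_finiteIndex_iff.mp hG, pow_zero]

theorem exponent_commutator_dvd_index_center :
    Monoid.exponent (commutator G) ∣ (center G).index :=
  Monoid.exponent_dvd_of_forall_pow_eq_one fun g =>
    Subtype.ext (pow_index_center_eq_one_of_mem_commutator g.2)

end

/-- Schur's theorem: if Z(G) has finite index, then G' is finite and
exp(G') divides |G : Z(G)|. -/
theorem schur (G : Type*) [Group G] (h : (Subgroup.center G).FiniteIndex) :
    Finite (commutator G) ∧
      Monoid.exponent (commutator G) ∣ (Subgroup.center G).index :=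
  ⟨inferInstance, exponent_commutator_dvd_index_center⟩
end

section
/- In the group ν(G), for all g, h, x ∈ G the iterated commutator identities [g, hφ, xφ] = [g, h, xφ] = [g, hφ, x] = [gφ, h, xφ] = [gφ, hφ, x] = [gφ, h, x] hold. -/
open Monoid Subgroup
open scoped commutatorElement

/-- The relators of the presentation of ν(G): for all g, h, k ∈ G,
`[g,hφ]^k = [g^k,(h^k)φ]` and `[g,hφ]^(kφ) = [g^k,(h^k)φ]` (exponents denote conjugation). -/
def nuRels (G : Type*) [Group G] : Set (Monoid.Coprod G G) :=
  { r | ∃ g h k : G,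
      r = ((Coprod.inl k)⁻¹ * ⁅(Coprod.inl g : Coprod G G), Coprod.inr h⁆ * Coprod.inl k) *
          (⁅(Coprod.inl (k⁻¹ * g * k) : Coprod G G), Coprod.inr (k⁻¹ * h * k)⁆)⁻¹ ∨
      r = ((Coprod.inr k)⁻¹ * ⁅(Coprod.inl g : Coprod G G), Coprod.inr h⁆ * Coprod.inr k) *
          (⁅(Coprod.inl (k⁻¹ * g * k) : Coprod G G), Coprod.inr (k⁻¹ * h * k)⁆)⁻¹ }

/-- The group ν(G): the quotient of the free product G * Gφ by the defining relations. -/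
def Nu (G : Type*) [Group G] := Coprod G G ⧸ Subgroup.normalClosure (nuRels G)

instance (G : Type*) [Group G] : Group (Nu G) := QuotientGroup.Quotient.group _

/-- The canonical map G → ν(G) (the copy `G`). -/
def nuL (G : Type*) [Group G] : G →* Nu G := (QuotientGroup.mk' _).comp Coprod.inl

/-- The canonical map G → ν(G) (the copy `Gφ`). -/
def nuR (G : Type*) [Group G] : G →* Nu G := (QuotientGroup.mk' _).comp Coprod.inr

/-! The relations of ν(G) say that conjugating `[g, hφ]` by `k` or by `kφ` conjugates both
entries by `k`. With `[a, b] = a b a⁻¹ b⁻¹` we have `g · hφ · g⁻¹ = [g, hφ] · hφ`, so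
conjugation by `kφ` sends `a · yφ · a⁻¹` to `a^k · (y^k)φ · (a^k)⁻¹`; two or three such moves
show that `[g, hφ]` and `[gφ, h]` both act on `xφ` as `[g, h]` does. Hence
`[g, hφ, xφ] = [gφ, h, xφ] = [g, h, xφ]`; exchanging the roles of `G` and `Gφ` gives
`[gφ, h, x] = [g, hφ, x] = [gφ, hφ, x]`, and the two triples meet because `x` and `xφ` act
alike on `[g, hφ]`. -/

theorem commutatorElement_congr_left_of_conj_eq {N : Type*} [Group N] {u v a : N}
    (h : u * a * u⁻¹ = v * a * v⁻¹) : ⁅u, a⁆ = ⁅v, a⁆ := by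
  rw [commutatorElement_def, commutatorElement_def, h]

theorem commutatorElement_congr_right_of_conj_eq {N : Type*} [Group N] {u a b : N}
    (h : a * u * a⁻¹ = b * u * b⁻¹) : ⁅u, a⁆ = ⁅u, b⁆ := by
  rw [← commutatorElement_inv a, ← commutatorElement_inv b, commutatorElement_def,
    commutatorElement_def, h]

section ConjEquivariant

variable {G N : Type*} [Group G] [Group N]

def ConjEquivariant (c l r : G →* N) : Prop :=
  ∀ g h k : G, c k * ⁅l g, r h⁆ * (c k)⁻¹ = ⁅l (k * g * k⁻¹), r (k * h * k⁻¹)⁆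

variable {c l r : G →* N}

theorem ConjEquivariant.swap (H : ConjEquivariant c l r) : ConjEquivariant c r l := by
  intro g h k
  rw [← commutatorElement_inv, ← commutatorElement_inv (l _), ← H h g k]
  group

theorem ConjEquivariant.conj_conj (H : ConjEquivariant r l r) (a y k : G) :
    r k * (l a * r y * (l a)⁻¹) * (r k)⁻¹ =
      l (k * a * k⁻¹) * r (k * y * k⁻¹) * (l (k * a * k⁻¹))⁻¹ := by
  have hconj : ∀ b z : G, l b * r z * (l b)⁻¹ = ⁅l b, r z⁆ * r z := fun b z => by
    rw [commutatorElement_def]; group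
  rw [hconj, hconj, ← H a y k]
  simp only [map_mul, map_inv]
  group

theorem ConjEquivariant.conj_commutatorElement_left (H : ConjEquivariant r l r) (g h x : G) :
    ⁅l g, r h⁆ * r x * ⁅l g, r h⁆⁻¹ = l ⁅g, h⁆ * r x * (l ⁅g, h⁆)⁻¹ := by
  have step := H.conj_conj g⁻¹ (h⁻¹ * x * h) h
  calc ⁅l g, r h⁆ * r x * ⁅l g, r h⁆⁻¹
      = l g * (r h * (l g⁻¹ * r (h⁻¹ * x * h) * (l g⁻¹)⁻¹) * (r h)⁻¹) * (l g)⁻¹ := by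
        simp only [commutatorElement_def, map_mul, map_inv]; group
    _ = l ⁅g, h⁆ * r x * (l ⁅g, h⁆)⁻¹ := by
        rw [step]; simp only [commutatorElement_def, map_mul, map_inv]; group

theorem ConjEquivariant.conj_commutatorElement_right (H : ConjEquivariant r l r) (g h x : G) :
    ⁅r g, l h⁆ * r x * ⁅r g, l h⁆⁻¹ = l ⁅g, h⁆ * r x * (l ⁅g, h⁆)⁻¹ := by
  have step₁ := H.conj_conj h⁻¹ x g⁻¹
  have step₂ := H.conj_conj (h * (g⁻¹ * h⁻¹ * g)) (g⁻¹ * x * g) g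
  calc ⁅r g, l h⁆ * r x * ⁅r g, l h⁆⁻¹
      = r g * (l h * (r g⁻¹ * (l h⁻¹ * r x * (l h⁻¹)⁻¹) * (r g⁻¹)⁻¹) * (l h)⁻¹) * (r g)⁻¹ := by
        simp only [commutatorElement_def, map_inv]; group
    _ = r g * (l (h * (g⁻¹ * h⁻¹ * g)) * r (g⁻¹ * x * g) *
          (l (h * (g⁻¹ * h⁻¹ * g)))⁻¹) * (r g)⁻¹ := by
        rw [step₁]; simp only [map_mul, map_inv, inv_inv]; group
    _ = l ⁅g, h⁆ * r x * (l ⁅g, h⁆)⁻¹ := by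
        rw [step₂]; simp only [commutatorElement_def, map_mul, map_inv]; group

end ConjEquivariant

theorem Nu.mk_eq_one_of_mem_nuRels {G : Type*} [Group G] {w : Coprod G G} (hw : w ∈ nuRels G) :
    (QuotientGroup.mk' (normalClosure (nuRels G))) w = 1 :=
  (QuotientGroup.eq_one_iff w).2 (subset_normalClosure hw)

theorem conjEquivariant_nuL (G : Type*) [Group G] : ConjEquivariant (nuL G) (nuL G) (nuR G) := by
  intro g h k
  have rel := Nu.mk_eq_one_of_mem_nuRels ⟨g, h, k⁻¹, Or.inl rfl⟩
  simp only [map_mul, map_inv, map_commutatorElement, mul_inv_eq_one, inv_inv] at rel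
  simp only [map_mul, map_inv]
  exact rel

theorem conjEquivariant_nuR (G : Type*) [Group G] : ConjEquivariant (nuR G) (nuL G) (nuR G) := by
  intro g h k
  have rel := Nu.mk_eq_one_of_mem_nuRels ⟨g, h, k⁻¹, Or.inr rfl⟩
  simp only [map_mul, map_inv, map_commutatorElement, mul_inv_eq_one, inv_inv] at rel
  simp only [map_mul, map_inv]
  exact rel

/-- Lemma 2.1(ii): the six iterated commutators coincide in ν(G). -/
theorem nu_comm_iterated (G : Type*) [Group G] (g h x : G) :
    ⁅⁅nuL G g, nuR G h⁆, nuR G x⁆ = ⁅⁅nuL G g, nuL G h⁆, nuR G x⁆ ∧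
    ⁅⁅nuL G g, nuL G h⁆, nuR G x⁆ = ⁅⁅nuL G g, nuR G h⁆, nuL G x⁆ ∧
    ⁅⁅nuL G g, nuR G h⁆, nuL G x⁆ = ⁅⁅nuR G g, nuL G h⁆, nuR G x⁆ ∧
    ⁅⁅nuR G g, nuL G h⁆, nuR G x⁆ = ⁅⁅nuR G g, nuR G h⁆, nuL G x⁆ ∧
    ⁅⁅nuR G g, nuR G h⁆, nuL G x⁆ = ⁅⁅nuR G g, nuL G h⁆, nuL G x⁆ := by
  have hL := conjEquivariant_nuL G
  have hR := conjEquivariant_nuR G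
  have hlrr := commutatorElement_congr_left_of_conj_eq (hR.conj_commutatorElement_left g h x)
  have hllr : ⁅⁅nuL G g, nuL G h⁆, nuR G x⁆ = ⁅nuL G ⁅g, h⁆, nuR G x⁆ := by
    rw [map_commutatorElement]
  have hrlr := commutatorElement_congr_left_of_conj_eq (hR.conj_commutatorElement_right g h x)
  have hlrl := commutatorElement_congr_left_of_conj_eq (hL.swap.conj_commutatorElement_right g h x)
  have hrrl : ⁅⁅nuR G g, nuR G h⁆, nuL G x⁆ = ⁅nuR G ⁅g, h⁆, nuL G x⁆ := by
    rw [map_commutatorElement]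
  have hrll := commutatorElement_congr_left_of_conj_eq (hL.swap.conj_commutatorElement_left g h x)
  have hlrl_lrr : ⁅⁅nuL G g, nuR G h⁆, nuL G x⁆ = ⁅⁅nuL G g, nuR G h⁆, nuR G x⁆ :=
    commutatorElement_congr_right_of_conj_eq ((hL g h x).trans (hR g h x).symm)
  have hmeet := hlrr.symm.trans (hlrl_lrr.symm.trans hlrl)
  rw [hlrr, hllr, hlrl, hrlr, hrrl, hrll]
  exact ⟨rfl, hmeet, hmeet.symm, hmeet, rfl⟩
end

section
/- In ν(G), if h ∈ G' (or g ∈ G'), then [g, hφ][h, gφ] = 1. -/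
open Monoid Subgroup
open scoped commutatorElement

/-!
Write `κ(x, y) = [x, yφ][y, xφ]` and `T = [G, Gφ]`. The defining relations make conjugation by
`kφ` agree with conjugation by `k` on `T`, and conjugation by `[a, bφ]` agree there with
conjugation by `[a, b]`. Hence `κ(x, y)` and `[x, xφ]` are central in `T`, the elements `κ(x, y)`
generate an abelian group on which `G` acts with `G'` acting trivially, `κ` is symmetric and a
crossed homomorphism in its second argument, and `x • κ(x, y) = y • κ(x, y)` (expand
`[xy, (xy)φ] = [yx, (yx)φ]` on both sides). These identities alone force `κ(g, ·)` to vanish on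
`G'`: by the crossed-homomorphism rule `κ(g, [a, b])` is the quotient of `κ(g, ab)` by
`κ(g, ba)`, and the last identity makes these two equal.
-/

section CrossedHom

variable {G M : Type*} [Group G] [Group M] [MulDistribMulAction G M] {f : G → M}

lemma crossedHom_one (hf : ∀ y z, f (y * z) = f y * y • f z) : f 1 = 1 := by
  simpa using hf 1 1

lemma crossedHom_inv (hf : ∀ y z, f (y * z) = f y * y • f z) (y : G) :
    f y⁻¹ = y⁻¹ • (f y)⁻¹ := by
  have h := hf y y⁻¹
  rw [mul_inv_cancel, crossedHom_one hf, eq_comm, mul_eq_one_iff_eq_inv] at h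
  rw [h, inv_inv, inv_smul_smul]

end CrossedHom

lemma smul_left_comm_of_commutator_smul {G α : Type*} [Group G] [MulAction G α]
    (hG' : ∀ (a b : G) (m : α), ⁅a, b⁆ • m = m) (a b : G) (m : α) : a • b • m = b • a • m := by
  rw [← hG' a b (b • a • m), smul_smul, smul_smul, smul_smul, commutatorElement_def]
  group

lemma smul_mem_closure_of_smul_mem {α A : Type*} [Monoid α] [Group A]
    [MulDistribMulAction α A] {s : Set A} (hs : ∀ (u : α), ∀ a ∈ s, u • a ∈ s) (u : α) {a : A}
    (ha : a ∈ closure s) : u • a ∈ closure s := by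
  induction ha using closure_induction with
  | mem a h => exact subset_closure (hs u a h)
  | one => rw [smul_one]; exact one_mem _
  | mul _ _ _ _ ha hb => rw [smul_mul']; exact mul_mem ha hb
  | inv _ _ ha => rw [smul_inv']; exact inv_mem ha

section SymmetricCrossedPairing

variable {G M : Type*} [Group G] [CommGroup M] [MulDistribMulAction G M] {κ : G → G → M}
  (hG' : ∀ (a b : G) (m : M), ⁅a, b⁆ • m = m) (hsymm : ∀ x y, κ x y = κ y x)
  (hmul : ∀ x y z, κ x (y * z) = κ x y * y • κ x z) (hself : ∀ x y, x • κ x y = y • κ x y)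
include hG' hsymm hmul hself

lemma smul_pairing_mul_smul_pairing (g u h : G) :
    u • κ g h * (g * g) • κ u h = κ g h * g • κ u h := by
  have hcomm := smul_left_comm_of_commutator_smul hG'
  have e1 : g • u • κ g h = h • u • κ g h := by rw [hcomm, hself, hcomm]
  have e2 : g • u • g • κ u h = h • g • g • κ u h := by
    rw [hcomm u g, hself, hcomm g h, hcomm g h]
  have key := hself (g * u) h
  rw [hsymm, hmul, hsymm h g, hsymm h u, smul_mul', smul_mul', mul_smul, mul_smul, e1, e2] at key
  rwa [← smul_mul', ← smul_mul', smul_left_cancel_iff, ← mul_smul] at key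

lemma pairing_mul_comm (g a b : G) : κ g (a * b) = κ g (b * a) := by
  have hb := smul_pairing_mul_smul_pairing hG' hsymm hmul hself g b a
  have ha := smul_pairing_mul_smul_pairing hG' hsymm hmul hself g a b
  rw [hsymm b a] at hb
  rw [hmul, hmul]
  apply mul_right_cancel (b := (g * g) • κ a b)
  rw [mul_assoc, ha, mul_assoc, hb, mul_left_comm]

lemma pairing_commutator (g a b : G) : κ g ⁅a, b⁆ = 1 := by
  have h := hmul g ⁅a, b⁆ (b * a)
  rwa [commutatorElement_def, show a * b * a⁻¹ * b⁻¹ * (b * a) = a * b by group,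
    ← commutatorElement_def, hG', pairing_mul_comm hG' hsymm hmul hself, right_eq_mul] at h

lemma pairing_eq_one_of_mem_commutator (g : G) {c : G} (hc : c ∈ commutator G) :
    κ g c = 1 := by
  rw [commutator_eq_closure] at hc
  induction hc using closure_induction with
  | mem _ h => obtain ⟨a, b, rfl⟩ := h; exact pairing_commutator hG' hsymm hmul hself g a b
  | one => exact crossedHom_one (hmul g)
  | mul x y _ _ hx hy => rw [hmul, hx, hy, smul_one, mul_one]
  | inv x _ hx => rw [crossedHom_inv (hmul g), hx, inv_one, smul_one]

end SymmetricCrossedPairing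

namespace Nu

variable {G : Type*} [Group G]

def crossComm (x y : G) : Nu G := ⁅nuL G x, nuR G y⁆

def crossCommSymm (x y : G) : Nu G := crossComm x y * crossComm y x

instance : MulDistribMulAction G (Nu G) :=
  MulDistribMulAction.compHom (Nu G) (MulAut.conj.comp (nuL G))

lemma smul_def (u : G) (t : Nu G) : u • t = nuL G u * t * (nuL G u)⁻¹ := rfl

lemma mk_eq_one_of_mem_nuRels_s7 {r : Coprod G G} (hr : r ∈ nuRels G) :
    QuotientGroup.mk' (normalClosure (nuRels G)) r = 1 :=
  (QuotientGroup.eq_one_iff r).2 (subset_normalClosure hr)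

lemma smul_crossComm (k x y : G) :
    k • crossComm x y = crossComm (k * x * k⁻¹) (k * y * k⁻¹) := by
  have := mk_eq_one_of_mem_nuRels_s7 ⟨x, y, k⁻¹, Or.inl rfl⟩
  rw [map_mul, map_inv _ ⁅_, _⁆, mul_inv_eq_one, map_mul, map_mul, map_inv, inv_inv,
    map_commutatorElement, map_commutatorElement] at this
  change (nuL G k⁻¹)⁻¹ * crossComm x y * nuL G k⁻¹ = _ at this
  rwa [map_inv, inv_inv] at this

lemma nuR_conj_crossComm (k x y : G) :
    nuR G k * crossComm x y * (nuR G k)⁻¹ = crossComm (k * x * k⁻¹) (k * y * k⁻¹) := by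
  have := mk_eq_one_of_mem_nuRels_s7 ⟨x, y, k⁻¹, Or.inr rfl⟩
  rw [map_mul, map_inv _ ⁅_, _⁆, mul_inv_eq_one, map_mul, map_mul, map_inv, inv_inv,
    map_commutatorElement, map_commutatorElement] at this
  change (nuR G k⁻¹)⁻¹ * crossComm x y * nuR G k⁻¹ = _ at this
  rwa [map_inv, inv_inv] at this

variable (G) in
def crossCommSubgroup : Subgroup (Nu G) := closure (Set.range fun p : G × G => crossComm p.1 p.2)

lemma crossComm_mem (x y : G) : crossComm x y ∈ crossCommSubgroup G :=
  subset_closure ⟨(x, y), rfl⟩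

lemma smul_mem_crossCommSubgroup (u : G) {t : Nu G} (ht : t ∈ crossCommSubgroup G) :
    u • t ∈ crossCommSubgroup G :=
  smul_mem_closure_of_smul_mem (by
    rintro u _ ⟨⟨x, y⟩, rfl⟩
    exact ⟨(u * x * u⁻¹, u * y * u⁻¹), (smul_crossComm u x y).symm⟩) u ht

lemma nuR_conj_eq_smul (u : G) {t : Nu G} (ht : t ∈ crossCommSubgroup G) :
    nuR G u * t * (nuR G u)⁻¹ = u • t := by
  refine MonoidHom.eqOn_closure (f := (MulAut.conj (nuR G u)).toMonoidHom)
    (g := MulDistribMulAction.toMonoidHom (Nu G) u) ?_ ht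
  rintro _ ⟨⟨x, y⟩, rfl⟩
  simp [nuR_conj_crossComm, smul_crossComm]

lemma crossComm_conj_eq_commutator_smul (a b : G) {t : Nu G} (ht : t ∈ crossCommSubgroup G) :
    crossComm a b * t * (crossComm a b)⁻¹ = ⁅a, b⁆ • t := by
  have hb := smul_mem_crossCommSubgroup (a⁻¹ * b⁻¹) ht
  rw [mul_smul] at hb
  calc crossComm a b * t * (crossComm a b)⁻¹
      = a • (nuR G b * (a⁻¹ • (nuR G b⁻¹ * t * (nuR G b⁻¹)⁻¹)) * (nuR G b)⁻¹) := by
        simp only [crossComm, smul_def, commutatorElement_def, map_inv]; group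
    _ = ⁅a, b⁆ • t := by
        rw [nuR_conj_eq_smul _ ht, nuR_conj_eq_smul _ hb, commutatorElement_def, mul_smul,
          mul_smul, mul_smul]

lemma crossComm_self_mem_centralizer (x : G) :
    crossComm x x ∈ centralizer (crossCommSubgroup G) := by
  refine mem_centralizer_iff.2 fun t ht => ?_
  have h := crossComm_conj_eq_commutator_smul x x ht
  rw [commutatorElement_self, one_smul, mul_inv_eq_iff_eq_mul] at h
  exact h.symm

lemma crossCommSymm_mem_centralizer (x y : G) :
    crossCommSymm x y ∈ centralizer (crossCommSubgroup G) := by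
  refine mem_centralizer_iff.2 fun t ht => ?_
  have h : crossCommSymm x y * t * (crossCommSymm x y)⁻¹ = t :=
    calc crossCommSymm x y * t * (crossCommSymm x y)⁻¹
        = crossComm x y * (crossComm y x * t * (crossComm y x)⁻¹) * (crossComm x y)⁻¹ := by
          rw [crossCommSymm]; group
      _ = t := by
          rw [crossComm_conj_eq_commutator_smul y x ht,
            crossComm_conj_eq_commutator_smul x y (smul_mem_crossCommSubgroup _ ht), smul_smul,
            ← commutatorElement_inv, inv_mul_cancel, one_smul]
  rw [mul_inv_eq_iff_eq_mul] at h
  exact h.symm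

lemma crossCommSymm_comm (x y : G) : crossCommSymm x y = crossCommSymm y x := by
  have h := mem_centralizer_iff.1 (crossCommSymm_mem_centralizer x y) _ (crossComm_mem y x)
  rw [crossCommSymm, ← mul_assoc] at h
  exact (mul_right_cancel h).symm

lemma smul_crossCommSymm (u x y : G) :
    u • crossCommSymm x y = crossCommSymm (u * x * u⁻¹) (u * y * u⁻¹) := by
  rw [crossCommSymm, smul_mul', smul_crossComm, smul_crossComm, crossCommSymm]

lemma crossComm_mul_right (x y z : G) :
    crossComm x (y * z) = crossComm x y * y • crossComm x z := by
  rw [← nuR_conj_eq_smul y (crossComm_mem x z)]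
  simp only [crossComm, map_mul, commutatorElement_def]
  group

lemma crossComm_mul_left (x y z : G) :
    crossComm (x * y) z = x • crossComm y z * crossComm x z := by
  simp only [crossComm, smul_def, map_mul, commutatorElement_def]
  group

lemma crossCommSymm_mul_right (x y z : G) :
    crossCommSymm x (y * z) = crossCommSymm x y * y • crossCommSymm x z := by
  have hmem : y • crossCommSymm x z ∈ centralizer (crossCommSubgroup G) := by
    rw [smul_crossCommSymm]; exact crossCommSymm_mem_centralizer _ _
  have hc := mem_centralizer_iff.1 hmem _ (crossComm_mem y x)
  calc crossCommSymm x (y * z) = crossComm x y * (y • crossCommSymm x z * crossComm y x) := by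
        rw [crossCommSymm, crossComm_mul_right, crossComm_mul_left, crossCommSymm, smul_mul']
        group
    _ = crossCommSymm x y * y • crossCommSymm x z := by rw [← hc, ← mul_assoc]; rfl

-- Expand `[k, (k h k⁻¹)φ]` by the crossed-homomorphism rule and compare with `k • [k, hφ]`.
lemma smul_crossComm_self (u k : G) : u • crossComm k k = crossComm k k := by
  obtain ⟨h, rfl⟩ : ∃ h, u = k * h * k⁻¹ := ⟨k⁻¹ * u * k, by group⟩
  have hexp : k • crossComm k h
      = crossComm k k * k • crossComm k h * ((k * h * k⁻¹) • crossComm k k)⁻¹ :=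
    calc k • crossComm k h = crossComm k (k * h * k⁻¹) := by
          rw [smul_crossComm, mul_inv_cancel_right]
      _ = _ := by
          rw [crossComm_mul_right, crossComm_mul_right, crossedHom_inv (crossComm_mul_right k),
            smul_smul, smul_inv']
  have hc := mem_centralizer_iff.1 (crossComm_self_mem_centralizer k) _
    (smul_mem_crossCommSubgroup k (crossComm_mem k h))
  rw [← hc, mul_assoc, left_eq_mul, mul_inv_eq_one] at hexp
  exact hexp.symm

lemma crossComm_self_mul (x y : G) :
    crossComm (x * y) (x * y) = crossComm x x * crossComm y y * x • crossCommSymm y x := by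
  have hmem := smul_mem_crossCommSubgroup x (crossComm_mem y x)
  have hyy := mem_centralizer_iff.1 (crossComm_self_mem_centralizer y) _ hmem
  have hxx := mem_centralizer_iff.1 (crossComm_self_mem_centralizer x) _ hmem
  have hxx_yy := mem_centralizer_iff.1 (crossComm_self_mem_centralizer x) _ (crossComm_mem y y)
  rw [crossComm_mul_left, crossComm_mul_right, crossComm_mul_right, smul_mul', smul_smul,
    smul_crossComm_self, crossCommSymm, smul_mul']
  calc x • crossComm y x * crossComm y y * (crossComm x x * x • crossComm x y)
      = crossComm y y * (x • crossComm y x * crossComm x x) * x • crossComm x y := by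
        rw [hyy]; group
    _ = crossComm x x * crossComm y y * (x • crossComm y x * x • crossComm x y) := by
        rw [hxx, ← hxx_yy]; group

lemma smul_crossCommSymm_self (x y : G) : x • crossCommSymm x y = y • crossCommSymm x y := by
  have hswap : crossComm (x * y) (x * y) = crossComm (y * x) (y * x) := by
    rw [← smul_crossComm_self x (y * x), smul_crossComm, ← mul_assoc, mul_inv_cancel_right]
  have hxx_yy := mem_centralizer_iff.1 (crossComm_self_mem_centralizer x) _ (crossComm_mem y y)
  have h := crossComm_self_mul x y
  rw [hswap, crossComm_self_mul, ← hxx_yy, crossCommSymm_comm y x] at h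
  exact (mul_left_cancel h).symm

variable (G) in
def crossCommSymmSubgroup : Subgroup (Nu G) :=
  closure (Set.range fun p : G × G => crossCommSymm p.1 p.2)

lemma crossCommSymmSubgroup_le_crossCommSubgroup :
    crossCommSymmSubgroup G ≤ crossCommSubgroup G :=
  (closure_le _).2 <| by
    rintro _ ⟨⟨x, y⟩, rfl⟩; exact mul_mem (crossComm_mem x y) (crossComm_mem y x)

lemma crossCommSymmSubgroup_le_centralizer :
    crossCommSymmSubgroup G ≤ centralizer (crossCommSubgroup G) :=
  (closure_le _).2 <| by rintro _ ⟨⟨x, y⟩, rfl⟩; exact crossCommSymm_mem_centralizer x y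

instance : IsMulCommutative (crossCommSymmSubgroup G) :=
  isMulCommutative_closure <| by
    rintro _ ⟨⟨x, y⟩, rfl⟩ _ ⟨⟨p, q⟩, rfl⟩
    exact mem_centralizer_iff.1 (crossCommSymm_mem_centralizer p q) _
      (crossCommSymmSubgroup_le_crossCommSubgroup (subset_closure ⟨(x, y), rfl⟩))

lemma smul_mem_crossCommSymmSubgroup (u : G) {t : Nu G} (ht : t ∈ crossCommSymmSubgroup G) :
    u • t ∈ crossCommSymmSubgroup G :=
  smul_mem_closure_of_smul_mem (by
    rintro u _ ⟨⟨x, y⟩, rfl⟩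
    exact ⟨(u * x * u⁻¹, u * y * u⁻¹), (smul_crossCommSymm u x y).symm⟩) u ht

instance : MulDistribMulAction G (crossCommSymmSubgroup G) where
  smul u m := ⟨u • (m : Nu G), smul_mem_crossCommSymmSubgroup u m.2⟩
  one_smul m := Subtype.ext (one_smul G (m : Nu G))
  mul_smul u v m := Subtype.ext (mul_smul u v (m : Nu G))
  smul_mul u m n := Subtype.ext (smul_mul' u (m : Nu G) n)
  smul_one u := Subtype.ext (smul_one u)

lemma commutator_smul_crossCommSymmSubgroup (a b : G) (m : crossCommSymmSubgroup G) :
    ⁅a, b⁆ • m = m := by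
  have hc := mem_centralizer_iff.1 (crossCommSymmSubgroup_le_centralizer m.2) _
    (crossComm_mem a b)
  apply Subtype.ext
  change ⁅a, b⁆ • (m : Nu G) = m
  rw [← crossComm_conj_eq_commutator_smul a b (crossCommSymmSubgroup_le_crossCommSubgroup m.2),
    hc, mul_inv_cancel_right]

open scoped IsMulCommutative in
lemma crossCommSymm_eq_one_of_mem_commutator (x : G) {c : G} (hc : c ∈ commutator G) :
    crossCommSymm x c = 1 := by
  let κ : G → G → crossCommSymmSubgroup G := fun p q =>
    ⟨crossCommSymm p q, subset_closure ⟨(p, q), rfl⟩⟩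
  have := pairing_eq_one_of_mem_commutator (κ := κ) commutator_smul_crossCommSymmSubgroup
    (fun p q => Subtype.ext (crossCommSymm_comm p q))
    (fun p q r => Subtype.ext (crossCommSymm_mul_right p q r))
    (fun p q => Subtype.ext (smul_crossCommSymm_self p q)) x hc
  exact congrArg Subtype.val this

end Nu

/-- Lemma 2.1(iii): if h ∈ G' or g ∈ G', then [g,hφ][h,gφ] = 1 in ν(G). -/
theorem nu_comm_derived (G : Type*) [Group G] (g h : G)
    (hmem : h ∈ commutator G ∨ g ∈ commutator G) :
    ⁅nuL G g, nuR G h⁆ * ⁅nuL G h, nuR G g⁆ = 1 := by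
  change Nu.crossCommSymm g h = 1
  rcases hmem with hh | hg
  · exact Nu.crossCommSymm_eq_one_of_mem_commutator g hh
  · rw [Nu.crossCommSymm_comm]
    exact Nu.crossCommSymm_eq_one_of_mem_commutator h hg
end

section
/- In ν(G), the conjugate of [g,hφ] by [x,yφ] equals the conjugate of [g,hφ] by [x,y], for all g,h,x,y ∈ G. -/
open Monoid Subgroup
open scoped commutatorElement

/-! By the defining relations, conjugating `[g, hφ]` by `k` and by `kφ` has the same effect: both
give `[g^k, (h^k)φ]`. Conjugation by a commutator `[x, w]` is the composite of the conjugations by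
`x`, `w`, `x⁻¹`, `w⁻¹`, each of which maps commutators `[g, hφ]` to commutators of the same shape,
so the result is the same for `w = y` and for `w = yφ`. -/

theorem commutatorElement_inv_mul_mul {H : Type*} [Group H] (u v c : H) :
    ⁅u, v⁆⁻¹ * c * ⁅u, v⁆ = v * (u * (v⁻¹ * (u⁻¹ * c * u) * v) * u⁻¹) * v⁻¹ := by
  simp only [commutatorElement_def]
  group

section Nu

variable (G : Type*) [Group G]

def Nu.mk : Coprod G G →* Nu G := QuotientGroup.mk' _

theorem nuL_apply (k : G) : nuL G k = Nu.mk G (Coprod.inl k) := rfl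

theorem nuR_apply (k : G) : nuR G k = Nu.mk G (Coprod.inr k) := rfl

theorem Nu.mk_eq_of_mem_nuRels {a b : Coprod G G} (hr : a * b⁻¹ ∈ nuRels G) :
    Nu.mk G a = Nu.mk G b :=
  QuotientGroup.eq_iff_div_mem.mpr <| by
    rw [div_eq_mul_inv]
    exact subset_normalClosure hr

theorem nuL_inv_mul_commutator_mul (g h k : G) :
    (nuL G k)⁻¹ * ⁅nuL G g, nuR G h⁆ * nuL G k =
      ⁅nuL G (k⁻¹ * g * k), nuR G (k⁻¹ * h * k)⁆ := by
  simp only [nuL_apply, nuR_apply, ← map_inv, ← map_mul, ← map_commutatorElement]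
  exact Nu.mk_eq_of_mem_nuRels G ⟨g, h, k, Or.inl rfl⟩

theorem nuR_inv_mul_commutator_mul (g h k : G) :
    (nuR G k)⁻¹ * ⁅nuL G g, nuR G h⁆ * nuR G k =
      ⁅nuL G (k⁻¹ * g * k), nuR G (k⁻¹ * h * k)⁆ := by
  simp only [nuL_apply, nuR_apply, ← map_inv, ← map_mul, ← map_commutatorElement]
  exact Nu.mk_eq_of_mem_nuRels G ⟨g, h, k, Or.inr rfl⟩

theorem nuL_mul_commutator_mul_inv (g h k : G) :
    nuL G k * ⁅nuL G g, nuR G h⁆ * (nuL G k)⁻¹ =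
      ⁅nuL G (k * g * k⁻¹), nuR G (k * h * k⁻¹)⁆ := by
  simpa using nuL_inv_mul_commutator_mul G g h k⁻¹

theorem nuR_mul_commutator_mul_inv (g h k : G) :
    nuR G k * ⁅nuL G g, nuR G h⁆ * (nuR G k)⁻¹ =
      ⁅nuL G (k * g * k⁻¹), nuR G (k * h * k⁻¹)⁆ := by
  simpa using nuR_inv_mul_commutator_mul G g h k⁻¹

end Nu

/-- Lemma 2.1(i): conjugation of [g,hφ] by [x,yφ] equals conjugation by [x,y]. -/
theorem nu_conj (G : Type*) [Group G] (g h x y : G) :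
    ⁅nuL G x, nuR G y⁆⁻¹ * ⁅nuL G g, nuR G h⁆ * ⁅nuL G x, nuR G y⁆ =
      ⁅nuL G x, nuL G y⁆⁻¹ * ⁅nuL G g, nuR G h⁆ * ⁅nuL G x, nuL G y⁆ := by
  rw [commutatorElement_inv_mul_mul, commutatorElement_inv_mul_mul]
  simp only [nuL_inv_mul_commutator_mul, nuR_inv_mul_commutator_mul, nuL_mul_commutator_mul_inv,
    nuR_mul_commutator_mul_inv]
end

section
/- The subgroup Υ(G) = [G, Gφ] of ν(G) is normal in ν(G), and ν(G) decomposes as the iterated semidirect product ([G,Gφ]⋊G)⋊Gφ. -/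
/-
Both copies of `G` generate ν(G), and the defining relators die under any map of `G ∗ Gφ` in
which the two copies commute. Hence the projections of `G ∗ Gφ` onto its factors descend to
retractions `ν(G) → G` onto `G` and onto `Gφ`, each killing the other copy and therefore also
`[G,Gφ]`; these kernels give the two trivial intersections. Normality is a general fact about
a group generated by subgroups `A` and `B`: both normalize `[A,B]`, and conjugation by `b ∈ B`
sends `a ∈ A` to `[b,a] a ∈ [A,B] A`.
-/

open Monoid Subgroup
open scoped commutatorElement

namespace Subgroup

variable {N : Type*} [Group N] {A B : Subgroup N}

theorem commutator_normal_of_sup_eq_top (hAB : A ⊔ B = ⊤) : (⁅A, B⁆ : Subgroup N).Normal := by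
  rw [← normalizer_eq_top_iff, eq_top_iff, ← hAB]
  exact sup_le (normalizer_commutator_ge_left A B) (normalizer_commutator_ge_right A B)

theorem sup_normal_of_commutator_le {H : Subgroup N} [H.Normal] (hAB : A ⊔ B = ⊤)
    (hH : ⁅A, B⁆ ≤ H) : (H ⊔ A).Normal := by
  rw [← normalizer_eq_top_iff, eq_top_iff, ← hAB]
  refine sup_le (le_sup_right.trans le_normalizer) (le_normalizer_iff.mpr ?_)
  intro b hb _ hk
  obtain ⟨n, hn, a, ha, rfl⟩ := mem_sup_of_normal_left.mp hk
  have hconj : b * (n * a) * b⁻¹ = (b * n * b⁻¹ * ⁅b, a⁆) * a := by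
    simp only [commutatorElement_def]; group
  rw [hconj]
  refine mul_mem (mem_sup_left (mul_mem (Normal.conj_mem ‹_› n hn b) (hH ?_))) (mem_sup_right ha)
  rw [commutator_comm]
  exact commutator_mem_commutator hb ha

theorem inf_range_eq_bot_of_leftInverse {G : Type*} [Group G] {H : Subgroup N} {f : N →* G}
    {i : G →* N} (hfi : Function.LeftInverse f i) (hH : H ≤ f.ker) : H ⊓ i.range = ⊥ := by
  rw [eq_bot_iff]
  rintro _ ⟨hx, g, rfl⟩
  rw [mem_bot, ← hfi g, (MonoidHom.mem_ker).mp (hH hx), map_one]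

end Subgroup

section Nu

variable {G : Type*} [Group G]

theorem normalClosure_nuRels_le_ker_of_commute {M : Type*} [Group M] {f : Coprod G G →* M}
    (hf : ∀ g h, Commute (f (Coprod.inl g)) (f (Coprod.inr h))) :
    normalClosure (nuRels G) ≤ f.ker := by
  refine normalClosure_le_normal ?_
  have hcomm (x y : G) : f ⁅(Coprod.inl x : Coprod G G), Coprod.inr y⁆ = 1 := by
    rw [map_commutatorElement, commutatorElement_eq_one_iff_commute]
    exact hf x y
  rintro _ ⟨g, h, k, rfl | rfl⟩ <;>
    simp only [SetLike.mem_coe, MonoidHom.mem_ker, map_mul f, map_inv f, hcomm, inv_one, mul_one,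
      inv_mul_cancel]

variable (G) in
def nuFst : Nu G →* G :=
  QuotientGroup.lift _ Coprod.fst (normalClosure_nuRels_le_ker_of_commute fun _ _ ↦ by simp)

variable (G) in
def nuSnd : Nu G →* G :=
  QuotientGroup.lift _ Coprod.snd (normalClosure_nuRels_le_ker_of_commute fun _ _ ↦ by simp)

theorem leftInverse_nuFst_nuL : Function.LeftInverse (nuFst G) (nuL G) := fun _ ↦ rfl

theorem leftInverse_nuSnd_nuR : Function.LeftInverse (nuSnd G) (nuR G) := fun _ ↦ rfl

theorem range_nuR_le_ker_nuFst : (nuR G).range ≤ (nuFst G).ker := by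
  rintro _ ⟨g, rfl⟩
  rfl

theorem range_nuL_le_ker_nuSnd : (nuL G).range ≤ (nuSnd G).ker := by
  rintro _ ⟨g, rfl⟩
  rfl

theorem range_nuL_sup_range_nuR : (nuL G).range ⊔ (nuR G).range = ⊤ := by
  have hL : (nuL G).range = (Coprod.inl : G →* Coprod G G).range.map (QuotientGroup.mk' _) :=
    MonoidHom.range_comp _ _
  have hR : (nuR G).range = (Coprod.inr : G →* Coprod G G).range.map (QuotientGroup.mk' _) :=
    MonoidHom.range_comp _ _
  have hmap : ((Coprod.inl : G →* Coprod G G).range ⊔ Coprod.inr.range).map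
      (QuotientGroup.mk' (normalClosure (nuRels G))) = ⊤ := by
    rw [Coprod.range_inl_sup_range_inr]
    exact map_top_of_surjective _ (QuotientGroup.mk'_surjective _)
  rw [hL, hR]
  exact (Subgroup.map_sup _ _ _).symm.trans hmap

end Nu

/-- Υ(G) = [G,Gφ] is normal in ν(G) and ν(G) = ([G,Gφ] ⋊ G) ⋊ Gφ (internal
iterated semidirect product). -/
theorem nu_decomposition (G : Type*) [Group G] :
    (⁅(nuL G).range, (nuR G).range⁆ : Subgroup (Nu G)).Normal ∧
    ⁅(nuL G).range, (nuR G).range⁆ ⊓ (nuL G).range = ⊥ ∧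
    (⁅(nuL G).range, (nuR G).range⁆ ⊔ (nuL G).range : Subgroup (Nu G)).Normal ∧
    (⁅(nuL G).range, (nuR G).range⁆ ⊔ (nuL G).range) ⊓ (nuR G).range = ⊥ ∧
    (⁅(nuL G).range, (nuR G).range⁆ ⊔ (nuL G).range) ⊔ (nuR G).range = ⊤ := by
  have hgen := range_nuL_sup_range_nuR (G := G)
  have hnormal := commutator_normal_of_sup_eq_top hgen
  refine ⟨hnormal, ?_, sup_normal_of_commutator_le hgen le_rfl, ?_, ?_⟩
  · exact inf_range_eq_bot_of_leftInverse leftInverse_nuFst_nuL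
      ((commutator_mono le_rfl range_nuR_le_ker_nuFst).trans (commutator_le_right _ _))
  · exact inf_range_eq_bot_of_leftInverse leftInverse_nuSnd_nuR
      (sup_le ((commutator_mono range_nuL_le_ker_nuSnd le_rfl).trans (commutator_le_left _ _))
        range_nuL_le_ker_nuSnd)
  · exact top_le_iff.mp (hgen ▸ sup_le_sup_right le_sup_right _)
end

section
/- The map [g,hφ] ↦ [g,h] extends to a well-defined group homomorphism ρ' from Υ(G) = [G,Gφ] ≤ ν(G) onto the derived subgroup G', and Υ(G)/ker(ρ') is isomorphic to G'. -/
open Monoid Subgroup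
open scoped commutatorElement

/-!
Both copies of `G` map identically onto `G`, and this respects the defining relations of `ν(G)`
since they only say that conjugating a commutator by `k` or by `kφ` conjugates both entries by
`k`. The resulting homomorphism `ν(G) → G` sends `[g, hφ]` to `[g, h]`; its restriction to
`Υ(G) = [G, Gφ]` is `ρ'`, whose image is `[G, G]` because both copies map onto `G`. The
isomorphism is then the first isomorphism theorem.
-/

namespace Nu

variable {G : Type*} [Group G]

lemma nuRels_subset_ker_lift_id :
    nuRels G ⊆ ((Coprod.lift (MonoidHom.id G) (MonoidHom.id G)).ker : Set (Coprod G G)) := by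
  rintro r ⟨g, h, k, rfl | rfl⟩ <;>
    simp [MonoidHom.mem_ker, commutatorElement_def, mul_assoc]

variable (G) in
def fold : Nu G →* G :=
  QuotientGroup.lift _ (Coprod.lift (MonoidHom.id G) (MonoidHom.id G))
    (normalClosure_le_normal nuRels_subset_ker_lift_id)

@[simp] lemma fold_nuL (g : G) : fold G (nuL G g) = g := rfl

@[simp] lemma fold_nuR (g : G) : fold G (nuR G g) = g := rfl

lemma map_fold_range_nuL : (nuL G).range.map (fold G) = ⊤ := by
  rw [← MonoidHom.range_comp]
  exact MonoidHom.range_eq_top_of_surjective _ fun g => ⟨g, fold_nuL g⟩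

lemma map_fold_range_nuR : (nuR G).range.map (fold G) = ⊤ := by
  rw [← MonoidHom.range_comp]
  exact MonoidHom.range_eq_top_of_surjective _ fun g => ⟨g, fold_nuR g⟩

variable (G) in
/-- The map `ρ' : Υ(G) → G`. -/
def derivedMap : (⁅(nuL G).range, (nuR G).range⁆ : Subgroup (Nu G)) →* G :=
  (fold G).domRestrict _

lemma derivedMap_commutator (g h : G)
    (hm : ⁅nuL G g, nuR G h⁆ ∈ ⁅(nuL G).range, (nuR G).range⁆) :
    derivedMap G ⟨⁅nuL G g, nuR G h⁆, hm⟩ = ⁅g, h⁆ := by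
  simp [derivedMap, commutatorElement_def]

lemma range_derivedMap : (derivedMap G).range = commutator G := by
  rw [derivedMap, MonoidHom.domRestrict_range, map_commutator, map_fold_range_nuL,
    map_fold_range_nuR, _root_.commutator_def]

end Nu

/-- The derived map ρ' : Υ(G) → G', [g,hφ] ↦ [g,h], is a well-defined
homomorphism onto G', and Υ(G)/ker ρ' ≅ G'. -/
theorem nu_derived_map (G : Type*) [Group G] :
    ∃ ρ : (⁅(nuL G).range, (nuR G).range⁆ : Subgroup (Nu G)) →* G,
      (∀ (g h : G) (hm : ⁅nuL G g, nuR G h⁆ ∈ ⁅(nuL G).range, (nuR G).range⁆),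
        ρ ⟨⁅nuL G g, nuR G h⁆, hm⟩ = ⁅g, h⁆) ∧
      ρ.range = commutator G ∧
      Nonempty
        (((⁅(nuL G).range, (nuR G).range⁆ : Subgroup (Nu G)) ⧸ ρ.ker) ≃* commutator G) :=
  ⟨Nu.derivedMap G, Nu.derivedMap_commutator, Nu.range_derivedMap,
    ⟨(QuotientGroup.quotientKerEquivRange _).trans (MulEquiv.subgroupCongr Nu.range_derivedMap)⟩⟩
end

section
/- Let G be a finitely generated group whose non-abelian tensor square [G,Gφ] (inside ν(G)) is finite. Then G is finite. -/
open Monoid Subgroup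
open scoped commutatorElement

/-! Collapsing the two copies of `G` maps `[G, Gφ]` onto `[G, G]`, so `[G, G]` is finite. If
`G/[G, G]` were infinite, being finitely generated it would have a nonzero homomorphism `F` to
`ℤ`, and `g ↦ (F g, 0, 0)`, `gφ ↦ (0, F g, 0)` would define a homomorphism from `ν(G)` to the
integral Heisenberg group, since commutators of the two images are central. It sends `[g, gφ]`
to the central element `(0, 0, F(g)²)`, of infinite order when `F g ≠ 0`, so `[G, Gφ]` would be
infinite. -/

-- `⟨a, b, c⟩` stands for the unitriangular matrix `[[1, a, c], [0, 1, b], [0, 0, 1]]`.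
@[ext]
structure Heisenberg (R : Type*) where
  a : R
  b : R
  c : R

namespace Heisenberg

variable {R : Type*} [CommRing R]

instance : Mul (Heisenberg R) := ⟨fun x y => ⟨x.a + y.a, x.b + y.b, x.c + y.c + x.a * y.b⟩⟩
instance : One (Heisenberg R) := ⟨⟨0, 0, 0⟩⟩
instance : Inv (Heisenberg R) := ⟨fun x => ⟨-x.a, -x.b, -x.c + x.a * x.b⟩⟩

@[simp] lemma mul_a (x y : Heisenberg R) : (x * y).a = x.a + y.a := rfl
@[simp] lemma mul_b (x y : Heisenberg R) : (x * y).b = x.b + y.b := rfl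
@[simp] lemma mul_c (x y : Heisenberg R) : (x * y).c = x.c + y.c + x.a * y.b := rfl
@[simp] lemma one_a : (1 : Heisenberg R).a = 0 := rfl
@[simp] lemma one_b : (1 : Heisenberg R).b = 0 := rfl
@[simp] lemma one_c : (1 : Heisenberg R).c = 0 := rfl
@[simp] lemma inv_a (x : Heisenberg R) : x⁻¹.a = -x.a := rfl
@[simp] lemma inv_b (x : Heisenberg R) : x⁻¹.b = -x.b := rfl
@[simp] lemma inv_c (x : Heisenberg R) : x⁻¹.c = -x.c + x.a * x.b := rfl

instance : Group (Heisenberg R) where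
  mul_assoc x y z := by ext <;> simp only [mul_a, mul_b, mul_c] <;> ring
  one_mul x := by ext <;> simp
  mul_one x := by ext <;> simp
  inv_mul_cancel x := by ext <;> simp

variable (R) in
def inl : Multiplicative R →* Heisenberg R where
  toFun r := ⟨r.toAdd, 0, 0⟩
  map_one' := rfl
  map_mul' r s := by ext <;> simp

variable (R) in
def inr : Multiplicative R →* Heisenberg R where
  toFun r := ⟨0, r.toAdd, 0⟩
  map_one' := rfl
  map_mul' r s := by ext <;> simp

lemma commutatorElement_inl_inr (r s : Multiplicative R) :
    ⁅inl R r, inr R s⁆ = ⟨0, 0, r.toAdd * s.toAdd⟩ := by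
  ext <;> simp [commutatorElement_def, inl, inr]

lemma conj_mk_zero_zero (x : Heisenberg R) (c : R) : x⁻¹ * ⟨0, 0, c⟩ * x = ⟨0, 0, c⟩ := by
  ext <;> simp
  ring

lemma mk_zero_zero_pow (c : R) (n : ℕ) : (⟨0, 0, c⟩ : Heisenberg R) ^ n = ⟨0, 0, n • c⟩ := by
  induction n with
  | zero => ext <;> simp
  | succ n ih => ext <;> simp [pow_succ, ih, add_one_mul]

lemma not_isOfFinOrder_mk_zero_zero [IsAddTorsionFree R] {c : R} (hc : c ≠ 0) :
    ¬IsOfFinOrder (⟨0, 0, c⟩ : Heisenberg R) := by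
  rw [isOfFinOrder_iff_pow_eq_one]
  rintro ⟨n, hn, hpow⟩
  rw [mk_zero_zero_pow] at hpow
  exact hc <| (nsmul_eq_zero_iff_right hn.ne').mp (congrArg Heisenberg.c hpow)

end Heisenberg

theorem AddCommGroup.exists_addMonoidHom_int_ne_zero {A : Type*} [AddCommGroup A]
    [AddGroup.FG A] [Infinite A] : ∃ f : A →+ ℤ, f ≠ 0 := by
  have : Module.Finite ℤ A := Module.Finite.iff_addGroup_fg.mpr ‹_›
  obtain ⟨x, hx⟩ : ∃ x, x ∉ Submodule.torsion ℤ A := by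
    by_contra! h
    have := Module.finite_of_fg_torsion A fun x => (Submodule.mem_torsion_iff x).mp (h x)
    exact not_finite A
  -- `A ⧸ torsion` is a finitely generated torsion-free `ℤ`-module, hence free.
  obtain ⟨f, hfx, -⟩ := Submodule.exists_dual_map_eq_bot_of_notMem hx inferInstance
  exact ⟨f.toAddMonoidHom, fun h => hfx (DFunLike.congr_fun h x)⟩

theorem exists_monoidHom_multiplicative_int_ne_one_of_infinite_abelianization (G : Type*)
    [Group G] [Group.FG G] [Infinite (Abelianization G)] : ∃ f : G →* Multiplicative ℤ, f ≠ 1 := by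
  have : Group.FG (Abelianization G) :=
    Group.fg_of_surjective (f := Abelianization.of) Quotient.mk''_surjective
  obtain ⟨f, hf⟩ := AddCommGroup.exists_addMonoidHom_int_ne_zero (A := Additive (Abelianization G))
  refine ⟨(AddMonoidHom.toMultiplicativeRight f).comp Abelianization.of, fun h => hf ?_⟩
  exact AddMonoidHom.toMultiplicativeRight.injective (Abelianization.hom_ext _ 1 h)

namespace Nu

variable {G H : Type*} [Group G] [Group H]

def lift (φ ψ : G →* H)
    (hφ : ∀ g h k : G, (φ k)⁻¹ * ⁅φ g, ψ h⁆ * φ k = ⁅φ (k⁻¹ * g * k), ψ (k⁻¹ * h * k)⁆)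
    (hψ : ∀ g h k : G, (ψ k)⁻¹ * ⁅φ g, ψ h⁆ * ψ k = ⁅φ (k⁻¹ * g * k), ψ (k⁻¹ * h * k)⁆) :
    Nu G →* H :=
  QuotientGroup.lift _ (Coprod.lift φ ψ) <| normalClosure_le_normal <| by
    rintro r ⟨g, h, k, rfl | rfl⟩ <;>
      rw [SetLike.mem_coe, MonoidHom.mem_ker, map_mul, map_inv, mul_inv_eq_one]
    · simpa [map_commutatorElement] using hφ g h k
    · simpa [map_commutatorElement] using hψ g h k

lemma map_lift_tensorSquare (φ ψ : G →* H)
    (hφ : ∀ g h k : G, (φ k)⁻¹ * ⁅φ g, ψ h⁆ * φ k = ⁅φ (k⁻¹ * g * k), ψ (k⁻¹ * h * k)⁆)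
    (hψ : ∀ g h k : G, (ψ k)⁻¹ * ⁅φ g, ψ h⁆ * ψ k = ⁅φ (k⁻¹ * g * k), ψ (k⁻¹ * h * k)⁆) :
    ⁅(nuL G).range, (nuR G).range⁆.map (lift φ ψ hφ hψ) = ⁅φ.range, ψ.range⁆ := by
  rw [map_commutator, MonoidHom.map_range, MonoidHom.map_range]
  rfl

variable (G) in
def collapse : Nu G →* G :=
  lift (.id G) (.id G)
    (fun g h k => by simp only [MonoidHom.id_apply, commutatorElement_def]; group)
    (fun g h k => by simp only [MonoidHom.id_apply, commutatorElement_def]; group)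

lemma map_collapse_tensorSquare :
    ⁅(nuL G).range, (nuR G).range⁆.map (collapse G) = commutator G := by
  rw [collapse, map_lift_tensorSquare,
    MonoidHom.range_eq_top_of_surjective _ Function.surjective_id, commutator_def]

lemma finite_commutator_of_finite_tensorSquare
    (hfin : Finite (⁅(nuL G).range, (nuR G).range⁆ : Subgroup (Nu G))) :
    Finite (commutator G) := by
  rw [← map_collapse_tensorSquare]
  exact Finite.of_surjective _ ((collapse G).subgroupMap_surjective _)

theorem infinite_tensorSquare_of_ne_one {R : Type*} [CommRing R] [NoZeroDivisors R]
    [IsAddTorsionFree R] (f : G →* Multiplicative R) (hf : f ≠ 1) :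
    Infinite (⁅(nuL G).range, (nuR G).range⁆ : Subgroup (Nu G)) := by
  have hconj (k g : G) : f (k⁻¹ * g * k) = f g := by simp [mul_comm]
  have hrel (x : Heisenberg R) (g h k : G) :
      x⁻¹ * ⁅Heisenberg.inl R (f g), Heisenberg.inr R (f h)⁆ * x =
        ⁅Heisenberg.inl R (f (k⁻¹ * g * k)), Heisenberg.inr R (f (k⁻¹ * h * k))⁆ := by
    rw [hconj, hconj, Heisenberg.commutatorElement_inl_inr, Heisenberg.conj_mk_zero_zero]
  set ν := lift ((Heisenberg.inl R).comp f) ((Heisenberg.inr R).comp f)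
    (fun g h k => hrel _ g h k) (fun g h k => hrel _ g h k)
  set T : Subgroup (Nu G) := ⁅(nuL G).range, (nuR G).range⁆
  obtain ⟨g, hg⟩ := DFunLike.ne_iff.mp hf
  have hz : ⁅nuL G g, nuR G g⁆ ∈ T := commutator_mem_commutator ⟨g, rfl⟩ ⟨g, rfl⟩
  have hνz : ν ⁅nuL G g, nuR G g⁆ = ⟨0, 0, (f g).toAdd * (f g).toAdd⟩ := by
    rw [map_commutatorElement]
    exact Heisenberg.commutatorElement_inl_inr _ _
  rw [← not_finite_iff_infinite]
  intro hfin
  have hfo : IsOfFinOrder (ν ⁅nuL G g, nuR G g⁆) :=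
    (ν.comp T.subtype).isOfFinOrder (isOfFinOrder_of_finite (⟨_, hz⟩ : T))
  rw [hνz] at hfo
  exact Heisenberg.not_isOfFinOrder_mk_zero_zero
    (mul_self_ne_zero.mpr (show (f g).toAdd ≠ 0 from hg)) hfo

end Nu

/-- Niroomand–Parvizi: a finitely generated group with finite non-abelian tensor
square [G,Gφ] is finite. -/
theorem fg_finite_tensor_square (G : Type*) [Group G] (hfg : Group.FG G)
    (hfin : Finite (⁅(nuL G).range, (nuR G).range⁆ : Subgroup (Nu G))) :
    Finite G := by
  have : Finite (commutator G) := Nu.finite_commutator_of_finite_tensorSquare hfin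
  have : Finite (G ⧸ commutator G) := by
    rw [← not_infinite_iff_finite]
    intro (_ : Infinite (Abelianization G))
    obtain ⟨f, hf⟩ := exists_monoidHom_multiplicative_int_ne_one_of_infinite_abelianization G
    exact not_finite_iff_infinite.mpr (Nu.infinite_tensorSquare_of_ne_one f hf) hfin
  exact Finite.of_equiv _ (groupEquivQuotientProdSubgroup (s := commutator G)).symm
end
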